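/- arXiv:1607.07631 — 3 statements merged into one kernel-verified Lean document; each statement's English description precedes it below -/
import Mathlib

section
/- For all real t ∈ [0,1), γ ≥ 0, λ ≥ 0, we have (t·γ² + t·γ·λ + λ²/2) ≤ ((1+√2)/2) · (t·γ² + λ²/(2(1−t))). -/
theorem stmt_0 (t γ lam : ℝ) (ht0 : 0 ≤ t) (ht1 : t < 1) (hγ : 0 ≤ γ) (hlam : 0 ≤ lam) :
    t * γ ^ 2 + t * γ * lam + lam ^ 2 / 2 ≤
      (1 + Real.sqrt 2) / 2 * (t * γ ^ 2 + lam ^ 2 / (2 * (1 - t))) := by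
  set s := Real.sqrt 2 with hs
  have hs2 : s ^ 2 = 2 := Real.sq_sqrt (by norm_num)
  have hs1 : 1 ≤ s := by nlinarith [Real.sqrt_nonneg 2]
  have h1t : (0:ℝ) < 1 - t := by linarith
  have key : 0 ≤ 2*t*(1-t)*(s-1)*γ^2 - 4*t*(1-t)*γ*lam + (s-1+2*t)*lam^2 := by
    rcases eq_or_lt_of_le ht0 with h | h
    · subst h
      nlinarith [mul_nonneg (by linarith : (0:ℝ) ≤ s - 1) (sq_nonneg lam)]
    · have hA : (0:ℝ) < 8*t*(1-t)*(s-1) := by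
        have : (0:ℝ) < s - 1 := by nlinarith
        positivity
      have hident : 8*t*(1-t)*(s-1) *
          (2*t*(1-t)*(s-1)*γ^2 - 4*t*(1-t)*γ*lam + (s-1+2*t)*lam^2) =
          (4*t*(1-t)*(s-1)*γ - 4*t*(1-t)*lam)^2 + 4*t*(1-t)*(2*t-2+s)^2*lam^2 := by
        linear_combination (4*t*(1-t)*lam^2) * hs2
      have hR : (0:ℝ) ≤ (4*t*(1-t)*(s-1)*γ - 4*t*(1-t)*lam)^2 +
          4*t*(1-t)*(2*t-2+s)^2*lam^2 := by positivity
      nlinarith [hident, hR, hA]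
  rw [← sub_nonneg]
  have heq : (1 + s) / 2 * (t * γ ^ 2 + lam ^ 2 / (2 * (1 - t))) -
      (t * γ ^ 2 + t * γ * lam + lam ^ 2 / 2) =
      (2*t*(1-t)*(s-1)*γ^2 - 4*t*(1-t)*γ*lam + (s-1+2*t)*lam^2) / (4*(1-t)) := by
    field_simp
    ring
  rw [heq]
  exact div_nonneg key (by linarith)
end

section
/- In the 4-machine instance of Theorem 1.2 (jobs J_{ij} for each pair of machines, J₁₂ and J₃₄ of size 3, the rest of size 1), the fractional Configuration-LP solution assigning to each machine Mᵢ with fraction 1/2 the singleton configuration {large job on Mᵢ} and with fraction 1/2 the configuration of its two small jobs is feasible (each job fractionally processed exactly once) and has cost 4·(9/2 + 3/2) = 24. Hence the integrality gap of the Configuration-LP is at least 26/24 = 13/12. -/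
/-- Jobs of the 4-machine instance: one job `J_{ij}` per pair `{i,j}` of machines. -/
def GapJob := {p : Fin 4 × Fin 4 // p.1 < p.2}

instance : Fintype GapJob := Subtype.fintype _
instance : DecidableEq GapJob := Subtype.instDecidableEq

/-- Job sizes: `J₁₂` and `J₃₄` have size 3, the other four jobs have size 1. -/
def gapSize (j : GapJob) : ℝ :=
  if j.val = ((0 : Fin 4), (1 : Fin 4)) ∨ j.val = ((2 : Fin 4), (3 : Fin 4)) then 3 else 1

/-- Cost of a configuration `C` of jobs: `((Σ sizes)² + Σ sizes²)/2`. -/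
noncomputable def cfgCost (C : Finset GapJob) : ℝ :=
  ((∑ j ∈ C, gapSize j) ^ 2 + ∑ j ∈ C, gapSize j ^ 2) / 2

/-- The large job processable on machine `i`. -/
def bigJob (i : Fin 4) : GapJob :=
  if i = 0 ∨ i = 1 then ⟨((0 : Fin 4), (1 : Fin 4)), by decide⟩
  else ⟨((2 : Fin 4), (3 : Fin 4)), by decide⟩

/-- The configuration of the two small jobs processable on machine `i`. -/
def smallCfg (i : Fin 4) : Finset GapJob :=
  Finset.univ.filter (fun j =>
    (j.val.1 = i ∨ j.val.2 = i) ∧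
      ¬(j.val = ((0 : Fin 4), (1 : Fin 4)) ∨ j.val = ((2 : Fin 4), (3 : Fin 4))))

/-- The fractional Configuration-LP solution: each machine gets its singleton large-job
configuration with value 1/2 and its two-small-jobs configuration with value 1/2. -/
noncomputable def ylp (i : Fin 4) (C : Finset GapJob) : ℝ :=
  if C = {bigJob i} then 1 / 2 else if C = smallCfg i then 1 / 2 else 0

/-! Every job `J_{ab}` lies in exactly two of the eight configurations used by `ylp`
(in `{bigJob a}` and `{bigJob b}` if it is large, in `smallCfg a` and `smallCfg b` if it is
small), each carrying weight `1/2`; this is the feasibility of the fractional solution.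
Its cost is `1/2 · (9 + 3) = 6` per machine. -/

open Finset

lemma singleton_bigJob_ne_smallCfg (i : Fin 4) : ({bigJob i} : Finset GapJob) ≠ smallCfg i := by
  fin_cases i <;> decide

lemma ylp_eq_add (i : Fin 4) (C : Finset GapJob) :
    ylp i C = (if C = {bigJob i} then 1 / 2 else 0) + (if C = smallCfg i then 1 / 2 else 0) := by
  have := singleton_bigJob_ne_smallCfg i
  unfold ylp
  split_ifs <;> simp_all

lemma sum_filter_ylp (i : Fin 4) (p : Finset GapJob → Prop) [DecidablePred p] :
    ∑ C ∈ univ.filter p, ylp i C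
      = (if p {bigJob i} then 1 / 2 else 0) + (if p (smallCfg i) then 1 / 2 else 0) := by
  simp [ylp_eq_add, sum_add_distrib, sum_ite_eq']

lemma sum_ylp (i : Fin 4) : ∑ C : Finset GapJob, ylp i C = 1 := by
  simpa [-one_div, add_halves] using sum_filter_ylp i (fun _ => True)

lemma card_configurations_containing (j : GapJob) :
    #{i : Fin 4 | j ∈ ({bigJob i} : Finset GapJob)} + #{i : Fin 4 | j ∈ smallCfg i} = 2 := by
  revert j
  decide

lemma sum_ylp_containing (j : GapJob) :
    ∑ i : Fin 4, ∑ C ∈ univ.filter (fun C : Finset GapJob => j ∈ C), ylp i C = 1 := by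
  simp only [sum_filter_ylp, sum_add_distrib, ← sum_filter, sum_const, nsmul_eq_mul]
  rw [← add_mul, ← Nat.cast_add, card_configurations_containing]
  norm_num

lemma bigJob_processable (i : Fin 4) : (bigJob i).val.1 = i ∨ (bigJob i).val.2 = i := by
  fin_cases i <;> decide

lemma processable_of_ylp_ne_zero {i : Fin 4} {C : Finset GapJob} (h : ylp i C ≠ 0) :
    ∀ j ∈ C, j.val.1 = i ∨ j.val.2 = i := by
  intro j hj
  unfold ylp at h
  split_ifs at h with hbig hsmall
  · rw [hbig, mem_singleton] at hj
    exact hj ▸ bigJob_processable i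
  · rw [hsmall] at hj
    exact (mem_filter.mp hj).2.1
  · exact absurd rfl h

lemma gapSize_bigJob (i : Fin 4) : gapSize (bigJob i) = 3 := by
  fin_cases i <;> simp +decide [gapSize]

lemma cfgCost_bigJob (i : Fin 4) : cfgCost {bigJob i} = 9 := by
  norm_num [cfgCost, gapSize_bigJob]

lemma cfgCost_of_forall_gapSize_eq_one {C : Finset GapJob} (h : ∀ j ∈ C, gapSize j = 1) :
    cfgCost C = ((#C : ℝ) ^ 2 + #C) / 2 := by
  have hsq : ∀ j ∈ C, gapSize j ^ 2 = 1 := fun j hj => by rw [h j hj, one_pow]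
  simp [cfgCost, sum_congr rfl h, sum_congr rfl hsq]

lemma gapSize_of_mem_smallCfg {i : Fin 4} {j : GapJob} (hj : j ∈ smallCfg i) : gapSize j = 1 :=
  if_neg (mem_filter.mp hj).2.2

lemma card_smallCfg (i : Fin 4) : #(smallCfg i) = 2 := by
  fin_cases i <;> decide

lemma cfgCost_smallCfg (i : Fin 4) : cfgCost (smallCfg i) = 3 := by
  rw [cfgCost_of_forall_gapSize_eq_one (fun _ => gapSize_of_mem_smallCfg), card_smallCfg]
  norm_num

lemma sum_ylp_mul_cfgCost (i : Fin 4) : ∑ C : Finset GapJob, ylp i C * cfgCost C = 6 := by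
  simp only [ylp_eq_add, add_mul, ite_mul, zero_mul, sum_add_distrib, sum_ite_eq', mem_univ,
    if_true, cfgCost_bigJob, cfgCost_smallCfg]
  norm_num

theorem stmt_12 :
    (∀ i : Fin 4, ∑ C : Finset GapJob, ylp i C ≤ 1) ∧
    (∀ j : GapJob,
      ∑ i : Fin 4, ∑ C ∈ Finset.univ.filter (fun C : Finset GapJob => j ∈ C), ylp i C = 1) ∧
    (∀ i : Fin 4, ∀ C : Finset GapJob, ylp i C ≠ 0 →
      ∀ j ∈ C, j.val.1 = i ∨ j.val.2 = i) ∧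
    (∑ i : Fin 4, ∑ C : Finset GapJob, ylp i C * cfgCost C = 24) ∧
    (26 : ℝ) / 24 = 13 / 12 := by
  refine ⟨fun i => (sum_ylp i).le, sum_ylp_containing,
    fun _ _ => processable_of_ylp_ne_zero, ?_, by norm_num⟩
  simp only [sum_ylp_mul_cfgCost, sum_const, card_univ, Fintype.card_fin, nsmul_eq_mul]
  norm_num
end

section
/- The function h(t,γ,λ) = (tγ² + tγλ + λ²/2)/(tγ² + λ²/(2(1−t))) satisfies h(1 − 1/√2, 1/2, (√2−1)/2) = 1/2 + 1/√2 = (1+√2)/2. -/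
/-! With `s = √2`, so `s² = 2` and `1 - t = 1 / s`, the numerator of `h` at the given point
is `1 / 8` and its denominator is `(s - 1) / 4`; the ratio `1 / (2 (s - 1))` is `(1 + s) / 2`
after rationalising with `(s - 1)(s + 1) = 1`. -/

section SquareRootOfTwo

variable {s : ℝ} (hs : s ^ 2 = 2)
include hs

lemma ne_zero_of_sq_eq_two : s ≠ 0 := by
  rintro rfl
  norm_num at hs

lemma numerator_eq_one_eighth :
    (1 - 1 / s) * (1 / 2) ^ 2 + (1 - 1 / s) * (1 / 2) * ((s - 1) / 2) + ((s - 1) / 2) ^ 2 / 2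
      = 1 / 8 := by
  have := ne_zero_of_sq_eq_two hs
  field_simp
  linear_combination 8 * s * hs

lemma denominator_eq_sub_one_div_four :
    (1 - 1 / s) * (1 / 2) ^ 2 + ((s - 1) / 2) ^ 2 / (2 * (1 - (1 - 1 / s))) = (s - 1) / 4 := by
  have := ne_zero_of_sq_eq_two hs
  field_simp
  linear_combination (4 * s ^ 2 - 8 * s + 4) * hs

lemma one_div_two_add_one_div_eq : 1 / 2 + 1 / s = (1 + s) / 2 := by
  have := ne_zero_of_sq_eq_two hs
  field_simp
  linear_combination -hs

lemma one_div_eight_div_eq : 1 / 8 / ((s - 1) / 4) = (1 + s) / 2 := by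
  have : s - 1 ≠ 0 := by
    intro h
    rw [sub_eq_zero.mp h] at hs
    norm_num at hs
  field_simp
  linear_combination -8 * hs

end SquareRootOfTwo

theorem stmt_13 :
    (let h : ℝ → ℝ → ℝ → ℝ := fun t γ lam =>
      (t * γ ^ 2 + t * γ * lam + lam ^ 2 / 2) / (t * γ ^ 2 + lam ^ 2 / (2 * (1 - t)))
     h (1 - 1 / Real.sqrt 2) (1 / 2) ((Real.sqrt 2 - 1) / 2) = 1 / 2 + 1 / Real.sqrt 2) ∧
    (1 / 2 + 1 / Real.sqrt 2 : ℝ) = (1 + Real.sqrt 2) / 2 := by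
  have hs : Real.sqrt 2 ^ 2 = 2 := Real.sq_sqrt zero_le_two
  refine ⟨?_, one_div_two_add_one_div_eq hs⟩
  show _ / _ = _
  rw [numerator_eq_one_eighth hs, denominator_eq_sub_one_div_four hs, one_div_eight_div_eq hs,
    one_div_two_add_one_div_eq hs]
end
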